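/- arXiv:2502.03574 — 4 statements merged into one kernel-verified Lean document; each statement's English description precedes it below -/
import Mathlib

section
/- Fix thresholds σ₁ ≥ … ≥ σₙ and values x₁, …, xₙ ∈ [0,1]. Define the stopping rule: open boxes in order 1, 2, …; stop before opening box k+1 if max_{ℓ ≤ k} x_ℓ ≥ σ_{k+1}; accept the maximum opened value. If box i is opened and r ≥ i is the last opened box and the accepted index j satisfies j ≤ i, then x_j = max(x₁, …, x_i) and x_j ≥ min(x_ℓ, σ_ℓ) for every ℓ > i. -/
/-- Deterministic Pandora's box dynamics: if box i is opened (i ≤ r, with r the last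
opened box) and the accepted index j satisfies j ≤ i, then x_j = max(x₁,…,x_i) and
x_j ≥ min(x_ℓ, σ_ℓ) for every ℓ > i. -/
theorem stmt_9 (n i r j : ℕ) (x σ : ℕ → ℝ)
    (hσ : ∀ k l, 1 ≤ k → k ≤ l → l ≤ n → σ l ≤ σ k)
    (hi1 : 1 ≤ i) (hir : i ≤ r) (hrn : r ≤ n) (hj1 : 1 ≤ j) (hji : j ≤ i)
    (hopen : ∀ k, (hk : 1 ≤ k) → k < r →
      (Finset.Icc 1 k).sup' (Finset.nonempty_Icc.mpr hk) x < σ (k + 1))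
    (hstop : r < n →
      σ (r + 1) ≤ (Finset.Icc 1 r).sup' (Finset.nonempty_Icc.mpr (hi1.trans hir)) x)
    (hacc : ∀ ℓ, 1 ≤ ℓ → ℓ ≤ r → x ℓ ≤ x j) :
    x j = (Finset.Icc 1 i).sup' (Finset.nonempty_Icc.mpr hi1) x ∧
    (∀ ℓ, i < ℓ → ℓ ≤ n → min (x ℓ) (σ ℓ) ≤ x j) := by
  constructor
  · apply le_antisymm
    · exact Finset.le_sup' x (Finset.mem_Icc.mpr ⟨hj1, hji⟩)
    · apply Finset.sup'_le
      intro b hb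
      obtain ⟨hb1, hb2⟩ := Finset.mem_Icc.mp hb
      exact hacc b hb1 (hb2.trans hir)
  · intro ℓ hiℓ hℓn
    by_cases hℓr : ℓ ≤ r
    · exact (min_le_left _ _).trans (hacc ℓ (hi1.trans hiℓ.le) hℓr)
    · push_neg at hℓr
      have hrn' : r < n := lt_of_lt_of_le hℓr hℓn
      have h1 : σ ℓ ≤ σ (r + 1) := hσ (r + 1) ℓ (by omega) hℓr hℓn
      have h2 : (Finset.Icc 1 r).sup' (Finset.nonempty_Icc.mpr (hi1.trans hir)) x ≤ x j := by
        apply Finset.sup'_le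
        intro b hb
        obtain ⟨hb1, hb2⟩ := Finset.mem_Icc.mp hb
        exact hacc b hb1 hb2
      exact (min_le_right _ _).trans (h1.trans ((hstop hrn').trans h2))
end

section
/- Under the deterministic Pandora's box dynamics with thresholds σ₁ ≥ … ≥ σₙ and values x₁, …, xₙ, if box i is opened, then the utility of the threshold algorithm, when boxes j > i are charged min(x_j,σ_j)-accounting (i.e., the accepted box j > i yields min(x_j, σ_j) instead of x_j and no costs for boxes beyond i), equals max(max_{ℓ ≤ i} x_ℓ, max_{i+1 ≤ ℓ ≤ n} min(x_ℓ, σ_ℓ)) minus the accrued cost c₁ + … + c_i. -/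
/-- Deterministic Pandora's box dynamics with modified accounting: if box i is opened,
the utility of the threshold algorithm — where an accepted box j > i yields
min(x_j, σ_j) and only costs c₁ + … + c_i are charged — equals
max(max_{ℓ ≤ i} x_ℓ, max_{i+1 ≤ ℓ ≤ n} min(x_ℓ, σ_ℓ)) − (c₁ + … + c_i). -/
theorem stmt_10 (n i r j : ℕ) (x σ c : ℕ → ℝ)
    (hσ : ∀ k l, 1 ≤ k → k ≤ l → l ≤ n → σ l ≤ σ k)
    (hi1 : 1 ≤ i) (hin : i < n) (hir : i ≤ r) (hrn : r ≤ n) (hj1 : 1 ≤ j) (hjr : j ≤ r)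
    (hopen : ∀ k, (hk : 1 ≤ k) → k < r →
      (Finset.Icc 1 k).sup' (Finset.nonempty_Icc.mpr hk) x < σ (k + 1))
    (hstop : r < n →
      σ (r + 1) ≤ (Finset.Icc 1 r).sup' (Finset.nonempty_Icc.mpr (hi1.trans hir)) x)
    (hacc : ∀ ℓ, 1 ≤ ℓ → ℓ ≤ r → x ℓ ≤ x j) :
    (if j ≤ i then x j else min (x j) (σ j)) - ∑ ℓ ∈ Finset.Icc 1 i, c ℓ =
      max ((Finset.Icc 1 i).sup' (Finset.nonempty_Icc.mpr hi1) x)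
        ((Finset.Icc (i + 1) n).sup' (Finset.nonempty_Icc.mpr hin)
          (fun ℓ => min (x ℓ) (σ ℓ))) - ∑ ℓ ∈ Finset.Icc 1 i, c ℓ := by
  rw [sub_left_inj]
  set B := (Finset.Icc 1 i).sup' (Finset.nonempty_Icc.mpr hi1) x with hB
  set M := (Finset.Icc (i + 1) n).sup' (Finset.nonempty_Icc.mpr hin)
      (fun ℓ => min (x ℓ) (σ ℓ)) with hM
  have hSr : (Finset.Icc 1 r).sup' (Finset.nonempty_Icc.mpr (hi1.trans hir)) x ≤ x j := by
    apply Finset.sup'_le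
    intro ℓ hℓ
    rw [Finset.mem_Icc] at hℓ
    exact hacc ℓ hℓ.1 hℓ.2
  have hBj : B ≤ x j := by
    apply Finset.sup'_le
    intro ℓ hℓ
    rw [Finset.mem_Icc] at hℓ
    exact hacc ℓ hℓ.1 (hℓ.2.trans hir)
  -- bound for boxes beyond r
  have hbeyond : ∀ ℓ, r < ℓ → ℓ ≤ n → σ ℓ ≤ x j := by
    intro ℓ hrℓ hℓn
    have hrn' : r < n := lt_of_lt_of_le hrℓ hℓn
    have h1 : σ ℓ ≤ σ (r + 1) := hσ (r + 1) ℓ (by omega) (by omega) hℓn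
    exact h1.trans ((hstop hrn').trans hSr)
  by_cases hji : j ≤ i
  · simp only [if_pos hji]
    have hjB : x j ≤ B := Finset.le_sup' x (Finset.mem_Icc.mpr ⟨hj1, hji⟩)
    have hMB : M ≤ B := by
      apply Finset.sup'_le
      intro ℓ hℓ
      rw [Finset.mem_Icc] at hℓ
      by_cases hℓr : ℓ ≤ r
      · exact le_trans (min_le_left _ _) ((hacc ℓ (by omega) hℓr).trans hjB)
      · exact le_trans (min_le_right _ _) ((hbeyond ℓ (by omega) hℓ.2).trans hjB)
    rw [max_eq_left hMB]
    exact le_antisymm hjB hBj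
  · simp only [if_neg hji]
    have hij : i < j := by omega
    have hj2 : 2 ≤ j := by omega
    have hσj : (Finset.Icc 1 (j - 1)).sup' (Finset.nonempty_Icc.mpr (by omega)) x < σ j := by
      have := hopen (j - 1) (by omega) (by omega)
      have hj1' : j - 1 + 1 = j := by omega
      rwa [hj1'] at this
    have hBσj : B < σ j := by
      refine lt_of_le_of_lt ?_ hσj
      apply Finset.sup'_le
      intro ℓ hℓ
      rw [Finset.mem_Icc] at hℓ
      exact Finset.le_sup' x (Finset.mem_Icc.mpr ⟨hℓ.1, by omega⟩)
    have hjM : min (x j) (σ j) ≤ M :=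
      Finset.le_sup' (fun ℓ => min (x ℓ) (σ ℓ))
        (Finset.mem_Icc.mpr ⟨by omega, hjr.trans hrn⟩)
    have hMj : M ≤ min (x j) (σ j) := by
      apply Finset.sup'_le
      intro ℓ hℓ
      rw [Finset.mem_Icc] at hℓ
      refine le_min ?_ ?_
      · by_cases hℓr : ℓ ≤ r
        · exact le_trans (min_le_left _ _) (hacc ℓ (by omega) hℓr)
        · exact le_trans (min_le_right _ _) (hbeyond ℓ (by omega) hℓ.2)
      · by_cases hℓj : j ≤ ℓ
        · exact le_trans (min_le_right _ _) (hσ j ℓ (by omega) hℓj hℓ.2)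
        · refine le_trans (min_le_left _ _) (le_of_lt (lt_of_le_of_lt ?_ hσj))
          exact Finset.le_sup' x (Finset.mem_Icc.mpr ⟨by omega, by omega⟩)
    rw [max_eq_right (le_trans (le_min hBj hBσj.le) hjM)]
    exact le_antisymm hjM hMj
end

section
/- Let W : [0,1]ⁿ → ℝ be a function that is non-decreasing and 1-Lipschitz in each coordinate separately. Let (X₁,…,Xₙ) and (X′₁,…,X′ₙ) be vectors of independent [0,1]-valued random variables with d_K(X_i, X′_i) ≤ ε for every i (Kolmogorov distance). Then |E[W(X₁,…,Xₙ)] − E[W(X′₁,…,X′ₙ)]| ≤ nε. -/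
/-!
Hybrid argument. By independence both expectations are integrals of `W` against product
measures `∏ νᵢ` and `∏ ν'ᵢ`, and swapping one factor `νᵢ` for `ν'ᵢ` costs at most `ε`: for fixed
other coordinates the section `g` of `W` is monotone and continuous with `g 1 - g 0 ≤ 1`, so for a
law `ρ` on `[0,1]` the layer-cake formula gives `∫ g dρ = g 0 + ∫₀¹ ρ{g - g 0 ≥ t} dt`, and each
superlevel set is a closed upper set, hence `∅`, `ℝ` or a tail `[z, ∞)`, whose `ν`- and
`ν'`-masses differ by at most `ε`.
-/

open MeasureTheory Set Function

section SeparatelyLipschitz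

variable {ι E F : Type*} [Fintype ι] [DecidableEq ι] [PseudoMetricSpace E] [PseudoMetricSpace F]
  {K : NNReal} {W : (ι → E) → F}

lemma dist_le_sum_of_lipschitzWith_update (h : ∀ i y, LipschitzWith K (W ∘ update y i))
    (u v : ι → E) : dist (W u) (W v) ≤ ∑ i, K * dist (u i) (v i) := by
  suffices key : ∀ s : Finset ι, ∀ u, (∀ i ∉ s, u i = v i) →
      dist (W u) (W v) ≤ ∑ i ∈ s, K * dist (u i) (v i) from key _ u (by simp)
  intro s
  induction s using Finset.induction_on with
  | empty => intro u hu; simp [funext fun i => hu i (Finset.notMem_empty i)]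
  | insert a s ha ih =>
    intro u hu
    have hw : ∀ i ∉ s, update u a (v a) i = v i := fun i hi => by
      rcases eq_or_ne i a with rfl | hia
      · simp
      · rw [update_of_ne hia, hu i (by simp [hia, hi])]
    calc dist (W u) (W v) ≤ dist (W u) (W (update u a (v a))) + dist (W (update u a (v a))) (W v) :=
          dist_triangle _ _ _
      _ ≤ K * dist (u a) (v a) + ∑ i ∈ s, K * dist (update u a (v a) i) (v i) :=
          add_le_add (by simpa using (h a u).dist_le_mul (u a) (v a)) (ih _ hw)
      _ = ∑ i ∈ insert a s, K * dist (u i) (v i) := by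
          rw [Finset.sum_insert ha]
          congr 1
          exact Finset.sum_congr rfl fun i hi => by rw [update_of_ne (ne_of_mem_of_not_mem hi ha)]

lemma lipschitzWith_of_lipschitzWith_update (h : ∀ i y, LipschitzWith K (W ∘ update y i)) :
    LipschitzWith (Fintype.card ι * K) W := by
  refine .of_dist_le_mul fun u v => (dist_le_sum_of_lipschitzWith_update h u v).trans ?_
  calc ∑ i, K * dist (u i) (v i) ≤ ∑ _i : ι, K * dist u v :=
        Finset.sum_le_sum fun i _ => mul_le_mul_of_nonneg_left (dist_le_pi_dist u v i) K.2
    _ = _ := by simp [mul_assoc]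

end SeparatelyLipschitz

noncomputable def clampUnit (x : ℝ) : ℝ := projIcc (0 : ℝ) 1 zero_le_one x

lemma clampUnit_mem (x : ℝ) : clampUnit x ∈ Icc (0 : ℝ) 1 := (projIcc _ _ _ x).2

lemma clampUnit_of_mem {x : ℝ} (hx : x ∈ Icc (0 : ℝ) 1) : clampUnit x = x :=
  congrArg Subtype.val (projIcc_of_mem _ hx)

lemma monotone_clampUnit : Monotone clampUnit := (Subtype.mono_coe _).comp (monotone_projIcc _)

lemma lipschitzWith_clampUnit : LipschitzWith 1 clampUnit := by
  have h := (LipschitzWith.subtype_val _).comp (LipschitzWith.projIcc (zero_le_one' ℝ))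
  rw [mul_one] at h
  exact h

lemma abs_apply_comp_clampUnit_le {ι : Type*} [Fintype ι] {W : (ι → ℝ) → ℝ} {K : NNReal}
    (hW : LipschitzWith K W) (x : ι → ℝ) : |W (clampUnit ∘ x)| ≤ |W 0| + K := by
  have hx : dist (clampUnit ∘ x) 0 ≤ 1 := (dist_pi_le_iff zero_le_one).2 fun i => by
    have := clampUnit_mem (x i)
    simpa [Real.dist_eq, abs_of_nonneg this.1] using this.2
  have hdist : |W (clampUnit ∘ x) - W 0| ≤ K * dist (clampUnit ∘ x) 0 := hW.dist_le_mul _ _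
  have := abs_sub_abs_le_abs_sub (W (clampUnit ∘ x)) (W 0)
  nlinarith [K.2]

lemma abs_integral_sub_le_of_forall {α : Type*} [MeasurableSpace α] {μ : Measure α}
    [IsProbabilityMeasure μ] {f g : α → ℝ} (hf : Integrable f μ) (hg : Integrable g μ) {c : ℝ}
    (h : ∀ x, |f x - g x| ≤ c) : |∫ x, f x ∂μ - ∫ x, g x ∂μ| ≤ c := by
  rw [← integral_sub hf hg, ← Real.norm_eq_abs]
  calc _ ≤ c * μ.real univ := norm_integral_le_of_norm_le_const (.of_forall h)
    _ = c := by simp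

section Product

variable {α β : Type*} [MeasurableSpace α] [MeasurableSpace β] {μ μ' : Measure α}
  {ν ν' : Measure β} [IsProbabilityMeasure μ] [IsProbabilityMeasure μ'] [IsProbabilityMeasure ν]
  [IsProbabilityMeasure ν'] {f : α × β → ℝ} {C c : ℝ}

lemma abs_integral_prod_sub_le_right (hf : Measurable f) (hfC : ∀ p, |f p| ≤ C)
    (h : ∀ x, |∫ y, f (x, y) ∂ν - ∫ y, f (x, y) ∂ν'| ≤ c) :
    |∫ p, f p ∂μ.prod ν - ∫ p, f p ∂μ.prod ν'| ≤ c := by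
  have hint (ρ : Measure β) [IsProbabilityMeasure ρ] : Integrable f (μ.prod ρ) :=
    .of_bound hf.aestronglyMeasurable C (.of_forall hfC)
  have hint_inner (ρ : Measure β) [IsProbabilityMeasure ρ] :
      Integrable (fun x => ∫ y, f (x, y) ∂ρ) μ :=
    .of_bound hf.stronglyMeasurable.integral_prod_right'.aestronglyMeasurable C <|
      .of_forall fun x =>
        (norm_integral_le_of_norm_le_const (.of_forall fun y => hfC (x, y))).trans_eq (by simp)
  rw [integral_prod f (hint ν), integral_prod f (hint ν')]
  exact abs_integral_sub_le_of_forall (hint_inner ν) (hint_inner ν') h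

lemma abs_integral_prod_sub_le_left (hf : Measurable f) (hfC : ∀ p, |f p| ≤ C)
    (h : ∀ y, |∫ x, f (x, y) ∂μ - ∫ x, f (x, y) ∂μ'| ≤ c) :
    |∫ p, f p ∂μ.prod ν - ∫ p, f p ∂μ'.prod ν| ≤ c := by
  rw [← integral_prod_swap (μ := μ), ← integral_prod_swap (μ := μ')]
  exact abs_integral_prod_sub_le_right (μ := ν) (hf.comp measurable_swap) (fun p => hfC p.swap) h

end Product

lemma integral_pi_fin_succ {X E : Type*} [MeasurableSpace X] [NormedAddCommGroup E]
    [NormedSpace ℝ E] {n : ℕ} (ν : Fin (n + 1) → Measure X) [∀ i, SigmaFinite (ν i)]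
    (W : (Fin (n + 1) → X) → E) :
    ∫ x, W x ∂Measure.pi ν =
      ∫ p, W (Fin.cons p.1 p.2) ∂(ν 0).prod (Measure.pi fun i => ν i.succ) := by
  rw [← (measurePreserving_piFinSuccAbove ν 0).symm.integral_comp']
  simp_rw [Fin.zero_succAbove, MeasurableEquiv.piFinSuccAbove_symm_apply, Fin.insertNthEquiv,
    Equiv.coe_fn_mk, Fin.insertNth_zero']

section Kolmogorov

variable {ν ν' : Measure ℝ} [IsProbabilityMeasure ν] [IsProbabilityMeasure ν'] {ε : ℝ}

lemma abs_measureReal_sub_le_of_isUpperSet_of_isClosed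
    (hK : ∀ z, |ν.real (Ici z) - ν'.real (Ici z)| ≤ ε) {S : Set ℝ} (hup : IsUpperSet S) (hcl : IsClosed S) : |ν.real S - ν'.real S| ≤ ε := by
  have hε : 0 ≤ ε := (abs_nonneg _).trans (hK 0)
  rcases S.eq_empty_or_nonempty with rfl | hne
  · simpa using hε
  by_cases hbdd : BddBelow S
  · have hS : S = Ici (sInf S) :=
      Subset.antisymm (fun a ha => csInf_le hbdd ha) (hup.Ici_subset (hcl.csInf_mem hne hbdd))
    rw [hS]
    exact hK _
  · have hS : S = univ := eq_univ_of_forall fun x =>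
      let ⟨y, hyS, hyx⟩ := not_bddBelow_iff.mp hbdd x
      hup hyx.le hyS
    simpa [hS] using hε

lemma integral_eq_add_integral_Ioc_measureReal_le {ρ : Measure ℝ} [IsProbabilityMeasure ρ]
    (hρ : ∀ᵐ x ∂ρ, x ∈ Icc (0 : ℝ) 1) {g : ℝ → ℝ} (hg : Monotone g) (hgc : Continuous g)
    (hg1 : g 1 - g 0 ≤ 1) :
    ∫ x, g x ∂ρ = g 0 + ∫ t in Ioc 0 1, ρ.real {x | t ≤ g x - g 0} := by
  have hnonneg : ∀ᵐ x ∂ρ, 0 ≤ g x - g 0 := by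
    filter_upwards [hρ] with x hx using sub_nonneg.2 (hg hx.1)
  have hle : ∀ᵐ x ∂ρ, g x - g 0 ≤ 1 := by
    filter_upwards [hρ] with x hx using (sub_le_sub_right (hg hx.2) _).trans hg1
  have hint : Integrable (fun x => g x - g 0) ρ :=
    .of_bound (by fun_prop) 1 <| by
      filter_upwards [hnonneg, hle] with x h0 h1 using abs_le.2 ⟨by linarith, h1⟩
  have hgint : Integrable g ρ :=
    (hint.add (integrable_const (g 0))).congr (.of_forall fun x => sub_add_cancel _ _)
  rw [← hint.integral_eq_integral_Ioc_meas_le hnonneg hle, integral_sub hgint (integrable_const _)]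
  simp

theorem abs_integral_sub_le_of_monotone (hν : ∀ᵐ x ∂ν, x ∈ Icc (0 : ℝ) 1)
    (hν' : ∀ᵐ x ∂ν', x ∈ Icc (0 : ℝ) 1) (hK : ∀ z, |ν.real (Ici z) - ν'.real (Ici z)| ≤ ε)
    {g : ℝ → ℝ} (hg : Monotone g) (hgc : Continuous g) (hg1 : g 1 - g 0 ≤ 1) :
    |∫ x, g x ∂ν - ∫ x, g x ∂ν'| ≤ ε := by
  have hint (ρ : Measure ℝ) [IsProbabilityMeasure ρ] :
      IntegrableOn (fun t => ρ.real {x | t ≤ g x - g 0}) (Ioc 0 1) := by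
    have hanti : Antitone fun t => ρ.real {x | t ≤ g x - g 0} := fun s t hst =>
      measureReal_mono fun x hx => hst.trans hx
    exact (hanti.locallyIntegrable.integrableOn_isCompact isCompact_Icc).mono_set
      Ioc_subset_Icc_self
  rw [integral_eq_add_integral_Ioc_measureReal_le hν hg hgc hg1,
    integral_eq_add_integral_Ioc_measureReal_le hν' hg hgc hg1, add_sub_add_left_eq_sub,
    ← integral_sub (hint ν) (hint ν')]
  rw [← Real.norm_eq_abs]
  calc _ ≤ ε * volume.real (Ioc (0 : ℝ) 1) :=
        norm_setIntegral_le_of_norm_le_const (by simp) fun t _ =>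
          abs_measureReal_sub_le_of_isUpperSet_of_isClosed hK
            (fun a b hab (ha : t ≤ g a - g 0) => ha.trans (sub_le_sub_right (hg hab) _))
            (isClosed_le continuous_const (hgc.sub continuous_const))
    _ = ε := by simp

end Kolmogorov

theorem abs_integral_pi_sub_le {n : ℕ} {W : (Fin n → ℝ) → ℝ} (hWm : Measurable W) {C : ℝ}
    (hWC : ∀ x, |W x| ≤ C) (hmono : ∀ i y, Monotone (W ∘ update y i))
    (hcont : ∀ i y, Continuous (W ∘ update y i))
    (hstep : ∀ i y, W (update y i 1) - W (update y i 0) ≤ 1)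
    {ν ν' : Fin n → Measure ℝ} [∀ i, IsProbabilityMeasure (ν i)]
    [∀ i, IsProbabilityMeasure (ν' i)] (hν : ∀ i, ∀ᵐ x ∂ν i, x ∈ Icc (0 : ℝ) 1)
    (hν' : ∀ i, ∀ᵐ x ∂ν' i, x ∈ Icc (0 : ℝ) 1) {ε : ℝ}
    (hK : ∀ i z, |(ν i).real (Ici z) - (ν' i).real (Ici z)| ≤ ε) :
    |∫ x, W x ∂Measure.pi ν - ∫ x, W x ∂Measure.pi ν'| ≤ n * ε := by
  induction n with
  | zero => simp [Measure.pi_of_empty ν, Measure.pi_of_empty ν']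
  | succ n ih =>
    have hA : Measurable fun p : ℝ × (Fin n → ℝ) => W (Fin.cons p.1 p.2) :=
      hWm.comp (continuous_fst.finCons continuous_snd).measurable
    have hhead (y : Fin n → ℝ) : W ∘ update (Fin.cons 0 y) 0 = fun x => W (Fin.cons x y) := by
      ext x; simp [Fin.update_cons_zero]
    have htail (x : ℝ) (y : Fin n → ℝ) (i : Fin n) :
        (fun y => W (Fin.cons x y)) ∘ update y i = W ∘ update (Fin.cons x y) i.succ := by
      ext a; simp [Fin.cons_update]
    rw [integral_pi_fin_succ, integral_pi_fin_succ]
    calc _ ≤ |∫ p, W (Fin.cons p.1 p.2) ∂(ν 0).prod (Measure.pi fun i => ν i.succ) -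
              ∫ p, W (Fin.cons p.1 p.2) ∂(ν' 0).prod (Measure.pi fun i => ν i.succ)| +
            |∫ p, W (Fin.cons p.1 p.2) ∂(ν' 0).prod (Measure.pi fun i => ν i.succ) -
              ∫ p, W (Fin.cons p.1 p.2) ∂(ν' 0).prod (Measure.pi fun i => ν' i.succ)| :=
          abs_sub_le _ _ _
      _ ≤ ε + n * ε := by
        refine add_le_add (abs_integral_prod_sub_le_left hA (fun _ => hWC _) fun y => ?_)
          (abs_integral_prod_sub_le_right hA (fun _ => hWC _) fun x => ?_)
        · rw [← hhead]
          exact abs_integral_sub_le_of_monotone (hν 0) (hν' 0) (hK 0) (hmono 0 _) (hcont 0 _)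
            (hstep 0 _)
        · refine ih (hWm.comp (continuous_const.finCons continuous_id).measurable) (fun _ => hWC _)
            (fun i y => htail x y i ▸ hmono i.succ _) (fun i y => htail x y i ▸ hcont i.succ _)
            (fun i y => by simpa [Fin.cons_update] using hstep i.succ (Fin.cons x y))
            (fun i => hν i.succ) (fun i => hν' i.succ) (fun i => hK i.succ)
      _ = (n + 1 : ℕ) * ε := by push_cast; ring

theorem abs_integral_pi_sub_le_of_lipschitzWith {n : ℕ} {W : (Fin n → ℝ) → ℝ}
    (hmono : ∀ i y, Monotone (W ∘ update y i)) (hlip : ∀ i y, LipschitzWith 1 (W ∘ update y i))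
    {ν ν' : Fin n → Measure ℝ} [∀ i, IsProbabilityMeasure (ν i)]
    [∀ i, IsProbabilityMeasure (ν' i)] (hν : ∀ i, ∀ᵐ x ∂ν i, x ∈ Icc (0 : ℝ) 1)
    (hν' : ∀ i, ∀ᵐ x ∂ν' i, x ∈ Icc (0 : ℝ) 1) {ε : ℝ}
    (hK : ∀ i z, |(ν i).real (Ici z) - (ν' i).real (Ici z)| ≤ ε) :
    |∫ x, W x ∂Measure.pi ν - ∫ x, W x ∂Measure.pi ν'| ≤ n * ε := by
  have hW : LipschitzWith n W := by simpa using lipschitzWith_of_lipschitzWith_update hlip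
  -- Clamping makes `W` bounded, so that Fubini applies, without changing it on the cube.
  set Wc : (Fin n → ℝ) → ℝ := fun x => W (clampUnit ∘ x)
  have hcube (ρ : Fin n → Measure ℝ) [∀ i, IsProbabilityMeasure (ρ i)]
      (hρ : ∀ i, ∀ᵐ x ∂ρ i, x ∈ Icc (0 : ℝ) 1) :
      ∫ x, W x ∂Measure.pi ρ = ∫ x, Wc x ∂Measure.pi ρ := by
    refine integral_congr_ae ?_
    filter_upwards [ae_all_iff.2 fun i => Measure.tendsto_eval_ae_ae.eventually (hρ i)] with x hx
    exact congrArg W (funext fun i => (clampUnit_of_mem (hx i)).symm)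
  have hsec (i : Fin n) (y : Fin n → ℝ) :
      Wc ∘ update y i = (W ∘ update (clampUnit ∘ y) i) ∘ clampUnit := by
    ext a; simp [Wc, comp_update]
  have hlipc (i : Fin n) (y : Fin n → ℝ) : LipschitzWith 1 (Wc ∘ update y i) := by
    rw [hsec]
    simpa only [mul_one] using (hlip i _).comp lipschitzWith_clampUnit
  rw [hcube ν hν, hcube ν' hν']
  refine abs_integral_pi_sub_le ?_ (abs_apply_comp_clampUnit_le hW)
    (fun i y => hsec i y ▸ (hmono i _).comp monotone_clampUnit) (fun i y => (hlipc i y).continuous)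
    (fun i y => ?_) hν hν' hK
  · exact (hW.continuous.comp (continuous_pi fun i =>
      lipschitzWith_clampUnit.continuous.comp (continuous_apply i))).measurable
  · have := (hlipc i y).dist_le_mul 1 0
    simp only [Real.dist_eq, comp_apply, NNReal.coe_one, one_mul, sub_zero, abs_one] at this
    exact (le_abs_self _).trans this

lemma ProbabilityTheory.iIndepFun.integral_comp_eq_integral_pi {Ω ι E : Type*}
    [MeasurableSpace Ω] {μ : Measure Ω} [Fintype ι] {β : ι → Type*}
    [∀ i, MeasurableSpace (β i)] [NormedAddCommGroup E] [NormedSpace ℝ E] {X : ∀ i, Ω → β i}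
    (hind : ProbabilityTheory.iIndepFun X μ) (hX : ∀ i, Measurable (X i)) {f : (∀ i, β i) → E}
    (hf : AEStronglyMeasurable f (Measure.pi fun i => μ.map (X i))) :
    ∫ ω, f (fun i => X i ω) ∂μ = ∫ x, f x ∂Measure.pi fun i => μ.map (X i) := by
  rw [← hind.map_fun_eq_pi_map fun i => (hX i).aemeasurable] at hf ⊢
  exact (integral_map (measurable_pi_lambda _ hX).aemeasurable hf).symm

theorem stmt_13_general {Ω : Type*} [MeasurableSpace Ω] (μ : Measure Ω) [IsProbabilityMeasure μ]
    (n : ℕ) (W : (Fin n → ℝ) → ℝ)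
    (hWmono : ∀ (i : Fin n) (y : Fin n → ℝ) (a b : ℝ), a ≤ b →
      W (Function.update y i a) ≤ W (Function.update y i b))
    (hWlip : ∀ (i : Fin n) (y : Fin n → ℝ) (a b : ℝ),
      |W (Function.update y i a) - W (Function.update y i b)| ≤ |a - b|)
    (X X' : Fin n → Ω → ℝ)
    (hX : ∀ i, Measurable (X i)) (hX' : ∀ i, Measurable (X' i))
    (hXr : ∀ i, ∀ᵐ ω ∂μ, X i ω ∈ Set.Icc (0 : ℝ) 1)
    (hX'r : ∀ i, ∀ᵐ ω ∂μ, X' i ω ∈ Set.Icc (0 : ℝ) 1)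
    (hindX : ProbabilityTheory.iIndepFun X μ)
    (hindX' : ProbabilityTheory.iIndepFun X' μ)
    (ε : ℝ)
    (hKge : ∀ i (z : ℝ),
      |(μ {ω | z ≤ X i ω}).toReal - (μ {ω | z ≤ X' i ω}).toReal| ≤ ε) :
    |(∫ ω, W (fun i => X i ω) ∂μ) - ∫ ω, W (fun i => X' i ω) ∂μ| ≤ n * ε := by
  have hmono (i : Fin n) (y : Fin n → ℝ) : Monotone (W ∘ update y i) := hWmono i y
  have hlip (i : Fin n) (y : Fin n → ℝ) : LipschitzWith 1 (W ∘ update y i) :=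
    .of_dist_le_mul fun a b => by simpa [Real.dist_eq] using hWlip i y a b
  have hW : Continuous W := (lipschitzWith_of_lipschitzWith_update hlip).continuous
  have hsupp {Y : Ω → ℝ} (hY : Measurable Y) (hYr : ∀ᵐ ω ∂μ, Y ω ∈ Icc (0 : ℝ) 1) :
      ∀ᵐ x ∂μ.map Y, x ∈ Icc (0 : ℝ) 1 :=
    (ae_map_iff hY.aemeasurable measurableSet_Icc).2 hYr
  have (i : Fin n) : IsProbabilityMeasure (μ.map (X i)) :=
    Measure.isProbabilityMeasure_map (hX i).aemeasurable
  have (i : Fin n) : IsProbabilityMeasure (μ.map (X' i)) :=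
    Measure.isProbabilityMeasure_map (hX' i).aemeasurable
  rw [hindX.integral_comp_eq_integral_pi hX hW.aestronglyMeasurable,
    hindX'.integral_comp_eq_integral_pi hX' hW.aestronglyMeasurable]
  refine abs_integral_pi_sub_le_of_lipschitzWith hmono hlip (fun i => hsupp (hX i) (hXr i))
    (fun i => hsupp (hX' i) (hX'r i)) fun i z => ?_
  rw [map_measureReal_apply (hX i) measurableSet_Ici,
    map_measureReal_apply (hX' i) measurableSet_Ici]
  exact hKge i z

/-- Hybrid argument: if W is non-decreasing and 1-Lipschitz in each coordinate and the
independent coordinate distributions are ε-close in Kolmogorov distance (in both tail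
forms), then |E[W(X)] − E[W(X′)]| ≤ nε. -/
theorem stmt_13 {Ω : Type*} [MeasurableSpace Ω] (μ : Measure Ω) [IsProbabilityMeasure μ]
    (n : ℕ) (W : (Fin n → ℝ) → ℝ)
    (hWmono : ∀ (i : Fin n) (y : Fin n → ℝ) (a b : ℝ), a ≤ b →
      W (Function.update y i a) ≤ W (Function.update y i b))
    (hWlip : ∀ (i : Fin n) (y : Fin n → ℝ) (a b : ℝ),
      |W (Function.update y i a) - W (Function.update y i b)| ≤ |a - b|)
    (X X' : Fin n → Ω → ℝ)
    (hX : ∀ i, Measurable (X i)) (hX' : ∀ i, Measurable (X' i))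
    (hXr : ∀ i, ∀ᵐ ω ∂μ, X i ω ∈ Set.Icc (0 : ℝ) 1)
    (hX'r : ∀ i, ∀ᵐ ω ∂μ, X' i ω ∈ Set.Icc (0 : ℝ) 1)
    (hindX : ProbabilityTheory.iIndepFun X μ)
    (hindX' : ProbabilityTheory.iIndepFun X' μ)
    (ε : ℝ)
    (hKle : ∀ i (z : ℝ),
      |(μ {ω | X i ω ≤ z}).toReal - (μ {ω | X' i ω ≤ z}).toReal| ≤ ε)
    (hKge : ∀ i (z : ℝ),
      |(μ {ω | z ≤ X i ω}).toReal - (μ {ω | z ≤ X' i ω}).toReal| ≤ ε) :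
    |(∫ ω, W (fun i => X i ω) ∂μ) - ∫ ω, W (fun i => X' i ω) ∂μ| ≤ n * ε :=
  stmt_13_general μ n W hWmono hWlip X X' hX hX' hXr hX'r hindX hindX' ε hKge
end

section
/- If X and X′ are [0,1]-valued random variables with Kolmogorov distance at most ε and with continuous CDFs, and σ, σ′ ∈ [0,1] satisfy E[(X − σ)₊] = c = E[(X′ − σ′)₊] for the same cost c > 0, then |E[(X − σ′)₊] − c| ≤ ε; i.e., the reserve price of the perturbed distribution is approximately a reserve price for the true distribution in objective value. -/
/-!
Layer cake: if `Y ≤ b` almost surely, then `E[(Y - s)₊] = ∫_0^{b-s} P(Y > s + t) dt`.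
Strict upper tails are complements of CDF values, so at each `t` the integrands for `X` and `X'`
differ by at most the Kolmogorov distance `ε`, hence the two expectations by at most `ε (b - s)`.
-/

open MeasureTheory Set

section

variable {Ω : Type*} [MeasurableSpace Ω] {μ : Measure Ω} [IsFiniteMeasure μ]

lemma integrableOn_measureReal_add_lt (Y : Ω → ℝ) (s L : ℝ) :
    IntegrableOn (fun t => μ.real {ω | s + t < Y ω}) (Ioc 0 L) := by
  have hanti : Antitone fun t => μ.real {ω | s + t < Y ω} := fun t t' htt' =>
    measureReal_mono fun ω (hω : s + t' < Y ω) => show s + t < Y ω by linarith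
  refine Measure.integrableOn_of_bounded (M := μ.real univ) measure_Ioc_lt_top.ne
    hanti.measurable.aestronglyMeasurable (ae_of_all _ fun t => ?_)
  rw [Real.norm_of_nonneg measureReal_nonneg]
  exact measureReal_mono (subset_univ _)

lemma integral_max_sub_zero_eq_setIntegral_measureReal_add_lt {Y : Ω → ℝ} {b : ℝ}
    (hY : Measurable Y) (hYb : ∀ᵐ ω ∂μ, Y ω ≤ b) (s : ℝ) :
    ∫ ω, max (Y ω - s) 0 ∂μ = ∫ t in Ioc 0 (b - s), μ.real {ω | s + t < Y ω} := by
  have hbound : ∀ᵐ ω ∂μ, max (Y ω - s) 0 ≤ max (b - s) 0 := by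
    filter_upwards [hYb] with ω hω
    exact max_le_max (by linarith) le_rfl
  have hint : Integrable (fun ω => max (Y ω - s) 0) μ := by
    refine Integrable.of_bound ((hY.sub_const s).max measurable_const).aestronglyMeasurable
      (max (b - s) 0) ?_
    filter_upwards [hbound] with ω hω
    rwa [Real.norm_of_nonneg (le_max_right _ _)]
  have hlevel : ∀ t, 0 < t → {ω | t < max (Y ω - s) 0} = {ω | s + t < Y ω} := fun t ht => by
    ext ω
    simp only [mem_ofPred_eq, lt_max_iff]
    constructor
    · rintro (h | h) <;> linarith
    · exact fun h => Or.inl (by linarith)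
  rw [hint.integral_eq_integral_meas_lt (ae_of_all _ fun ω => le_max_right _ _),
    setIntegral_eq_of_subset_of_ae_sdiff_eq_zero measurableSet_Ioi.nullMeasurableSet
      Ioc_subset_Ioi_self]
  · exact setIntegral_congr_fun measurableSet_Ioc fun t ht => by rw [hlevel t ht.1]
  · refine ae_of_all _ fun t ⟨(ht0 : 0 < t), htL⟩ => ?_
    have htb : b - s < t := lt_of_not_ge fun h => htL ⟨ht0, h⟩
    rw [hlevel t ht0, measureReal_eq_zero_iff, measure_eq_zero_iff_ae_notMem]
    filter_upwards [hYb] with ω hω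
    exact fun (h : s + t < Y ω) => by linarith

lemma measureReal_lt_sub_measureReal_lt {X X' : Ω → ℝ} (hX : Measurable X)
    (hX' : Measurable X') (z : ℝ) :
    μ.real {ω | z < X ω} - μ.real {ω | z < X' ω} =
      μ.real {ω | X' ω ≤ z} - μ.real {ω | X ω ≤ z} := by
  have hcompl : ∀ Z : Ω → ℝ, {ω | z < Z ω} = {ω | Z ω ≤ z}ᶜ := fun Z => by
    ext ω
    simp
  rw [hcompl, hcompl, measureReal_compl (measurableSet_le hX measurable_const),
    measureReal_compl (measurableSet_le hX' measurable_const)]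
  ring

lemma abs_integral_max_sub_zero_sub_le {X X' : Ω → ℝ} {b s ε : ℝ} (hX : Measurable X)
    (hX' : Measurable X') (hXb : ∀ᵐ ω ∂μ, X ω ≤ b) (hX'b : ∀ᵐ ω ∂μ, X' ω ≤ b)
    (hK : ∀ z, |μ.real {ω | X ω ≤ z} - μ.real {ω | X' ω ≤ z}| ≤ ε) (hs : s ≤ b) :
    |∫ ω, max (X ω - s) 0 ∂μ - ∫ ω, max (X' ω - s) 0 ∂μ| ≤ ε * (b - s) := by
  rw [integral_max_sub_zero_eq_setIntegral_measureReal_add_lt hX hXb,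
    integral_max_sub_zero_eq_setIntegral_measureReal_add_lt hX' hX'b,
    ← integral_sub (integrableOn_measureReal_add_lt X s _)
      (integrableOn_measureReal_add_lt X' s _)]
  have hpointwise : ∀ t ∈ Ioc 0 (b - s),
      ‖μ.real {ω | s + t < X ω} - μ.real {ω | s + t < X' ω}‖ ≤ ε := fun t _ => by
    rw [Real.norm_eq_abs, measureReal_lt_sub_measureReal_lt hX hX', abs_sub_comm]
    exact hK (s + t)
  simpa [Real.volume_real_Ioc_of_le (sub_nonneg.2 hs)] using
    norm_setIntegral_le_of_norm_le_const (μ := volume) measure_Ioc_lt_top hpointwise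

end

theorem stmt_16_general {Ω : Type*} [MeasurableSpace Ω] (μ : Measure Ω) [IsProbabilityMeasure μ]
    (X X' : Ω → ℝ) (hX : Measurable X) (hX' : Measurable X')
    (hXr : ∀ᵐ ω ∂μ, X ω ∈ Set.Icc (0 : ℝ) 1) (hX'r : ∀ᵐ ω ∂μ, X' ω ∈ Set.Icc (0 : ℝ) 1)
    (ε : ℝ) (hK : ∀ z : ℝ, |(μ {ω | X ω ≤ z}).toReal - (μ {ω | X' ω ≤ z}).toReal| ≤ ε)
    (σ' : ℝ) (hσ' : σ' ∈ Set.Icc (0 : ℝ) 1)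
    (c : ℝ)
    (hres' : ∫ ω, max (X' ω - σ') 0 ∂μ = c) :
    |(∫ ω, max (X ω - σ') 0 ∂μ) - c| ≤ ε := by
  have hε : 0 ≤ ε := (abs_nonneg _).trans (hK 0)
  calc |(∫ ω, max (X ω - σ') 0 ∂μ) - c|
      ≤ ε * (1 - σ') := hres' ▸ abs_integral_max_sub_zero_sub_le hX hX'
        (hXr.mono fun _ h => h.2) (hX'r.mono fun _ h => h.2) hK hσ'.2
    _ ≤ ε := by nlinarith [hσ'.1]

/-- If X, X′ are [0,1]-valued with continuous CDFs and Kolmogorov distance ≤ ε, and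
σ, σ′ ∈ [0,1] are reserve prices for the same cost c > 0 (E[(X − σ)₊] = c =
E[(X′ − σ′)₊]), then the perturbed reserve price σ′ is approximately a reserve price
for X: |E[(X − σ′)₊] − c| ≤ ε. -/
theorem stmt_16 {Ω : Type*} [MeasurableSpace Ω] (μ : Measure Ω) [IsProbabilityMeasure μ]
    (X X' : Ω → ℝ) (hX : Measurable X) (hX' : Measurable X')
    (hXr : ∀ᵐ ω ∂μ, X ω ∈ Set.Icc (0 : ℝ) 1) (hX'r : ∀ᵐ ω ∂μ, X' ω ∈ Set.Icc (0 : ℝ) 1)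
    (hcdfX : Continuous fun z : ℝ => (μ {ω | X ω ≤ z}).toReal)
    (hcdfX' : Continuous fun z : ℝ => (μ {ω | X' ω ≤ z}).toReal)
    (ε : ℝ) (hK : ∀ z : ℝ, |(μ {ω | X ω ≤ z}).toReal - (μ {ω | X' ω ≤ z}).toReal| ≤ ε)
    (σ σ' : ℝ) (hσ : σ ∈ Set.Icc (0 : ℝ) 1) (hσ' : σ' ∈ Set.Icc (0 : ℝ) 1)
    (c : ℝ) (hc : 0 < c)
    (hres : ∫ ω, max (X ω - σ) 0 ∂μ = c)
    (hres' : ∫ ω, max (X' ω - σ') 0 ∂μ = c) :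
    |(∫ ω, max (X ω - σ') 0 ∂μ) - c| ≤ ε :=
  stmt_16_general μ X X' hX hX' hXr hX'r ε hK σ' hσ' c hres'
end
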